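/- Let û: ℝ³ → ℝ⁴ be C¹ with |û(x)| = 1 everywhere, write û = (û¹,û²,û³,û⁴), and define the 1-form (vector field) η := 2(-û² ∇û¹ + û¹ ∇û² - û⁴ ∇û³ + û³ ∇û⁴). Then, identifying ℝ⁴ ≅ ℂ² via (û¹+iû², û³+iû⁴) and letting u := h ∘ û: ℝ³ → S² ⊂ ℝ³ be the composition with the Hopf map, one has the pointwise identity |Dû|² = ¼|η|² + ¼|Du|², where |·| denotes the Frobenius norm of the Jacobian. -/

import Mathlib

open Matrix

/-- The `j`-th partial derivative of a map `ℝ³ → ℝⁿ`. -/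
noncomputable def pderiv3 {n : ℕ} (f : (Fin 3 → ℝ) → (Fin n → ℝ)) (j : Fin 3)
    (x : Fin 3 → ℝ) : Fin n → ℝ :=
  fderiv ℝ f x (Pi.single j 1)

/-- The Hopf map extended to `ℝ⁴ ≅ ℂ²`, `(z,w) ↦ (2 z w̄, |z|²-|w|²)`, in real coordinates. -/
def hopfR (x : Fin 4 → ℝ) : Fin 3 → ℝ :=
  ![2 * (x 0 * x 2 + x 1 * x 3), 2 * (x 1 * x 2 - x 0 * x 3),
    x 0 ^ 2 + x 1 ^ 2 - x 2 ^ 2 - x 3 ^ 2]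

/-- Energy identity for Hopf lifts: if `û : ℝ³ → S³ ⊂ ℝ⁴` is `C¹`, `u = h ∘ û`, and
`η = 2(-û²∇û¹ + û¹∇û² - û⁴∇û³ + û³∇û⁴)`, then pointwise
`|Dû|² = ¼|η|² + ¼|Du|²` (Frobenius norms of the Jacobians). -/
theorem hopf_lift_energy_identity (uh : (Fin 3 → ℝ) → (Fin 4 → ℝ))
    (hC1 : ContDiff ℝ 1 uh) (hsph : ∀ x, uh x ⬝ᵥ uh x = 1)
    (u : (Fin 3 → ℝ) → (Fin 3 → ℝ)) (hu : u = hopfR ∘ uh)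
    (η : (Fin 3 → ℝ) → Fin 3 → ℝ)
    (hη : ∀ x j, η x j = 2 * (-(uh x 1) * pderiv3 uh j x 0 + uh x 0 * pderiv3 uh j x 1
        - uh x 3 * pderiv3 uh j x 2 + uh x 2 * pderiv3 uh j x 3))
    (x : Fin 3 → ℝ) :
    ∑ j : Fin 3, pderiv3 uh j x ⬝ᵥ pderiv3 uh j x
      = (1 / 4) * ∑ j : Fin 3, (η x j) ^ 2
        + (1 / 4) * ∑ j : Fin 3, pderiv3 u j x ⬝ᵥ pderiv3 u j x := by
  subst hu
  have hdiff : DifferentiableAt ℝ uh x := (hC1.differentiable one_ne_zero) x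
  have key : ∀ j : Fin 3, pderiv3 uh j x ⬝ᵥ pderiv3 uh j x
      = (1/4) * (η x j)^2
        + (1/4) * (pderiv3 (hopfR ∘ uh) j x ⬝ᵥ pderiv3 (hopfR ∘ uh) j x) := by
    intro j
    have hf : ∀ k : Fin 4, HasFDerivAt (fun y => uh y k)
        ((ContinuousLinearMap.proj k).comp (fderiv ℝ uh x)) x := fun k =>
      HasFDerivAt.comp (g := fun f : Fin 4 → ℝ => f k) x (hasFDerivAt_apply k (uh x)) hdiff.hasFDerivAt
    set L : Fin 4 → ((Fin 3 → ℝ) →L[ℝ] ℝ) :=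
      fun k => (ContinuousLinearMap.proj k).comp (fderiv ℝ uh x) with hL
    set D : Fin 3 → ((Fin 3 → ℝ) →L[ℝ] ℝ) :=
      ![(2:ℝ) • ((uh x 0 • L 2 + uh x 2 • L 0) + (uh x 1 • L 3 + uh x 3 • L 1)),
        (2:ℝ) • ((uh x 1 • L 2 + uh x 2 • L 1) - (uh x 0 • L 3 + uh x 3 • L 0)),
        (((uh x 0 • L 0 + uh x 0 • L 0) + (uh x 1 • L 1 + uh x 1 • L 1))
          - (uh x 2 • L 2 + uh x 2 • L 2)) - (uh x 3 • L 3 + uh x 3 • L 3)] with hD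
    have hU : HasFDerivAt (hopfR ∘ uh) (ContinuousLinearMap.pi D) x := by
      apply hasFDerivAt_pi''
      intro i
      rw [ContinuousLinearMap.proj_pi]
      fin_cases i
      · have := (((hf 0).mul (hf 2)).add ((hf 1).mul (hf 3))).const_mul (2:ℝ)
        simpa [hopfR, hD, Function.comp] using this
      · have := (((hf 1).mul (hf 2)).sub ((hf 0).mul (hf 3))).const_mul (2:ℝ)
        simpa [hopfR, hD, Function.comp] using this
      · have := ((((hf 0).mul (hf 0)).add ((hf 1).mul (hf 1))).sub
          ((hf 2).mul (hf 2))).sub ((hf 3).mul (hf 3))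
        simpa [hopfR, hD, Function.comp, pow_two, Pi.mul_def, Pi.add_def, Pi.sub_def] using this
    have hfd : pderiv3 (hopfR ∘ uh) j x = (ContinuousLinearMap.pi D) (Pi.single j 1) := by
      rw [pderiv3, hU.fderiv]
    have hv : ∀ k : Fin 4, pderiv3 uh j x k = L k (Pi.single j 1) := by
      intro k
      simp [pderiv3, hL]
    rw [hfd, hη]
    simp only [dotProduct, Fin.sum_univ_four, Fin.sum_univ_three,
      ContinuousLinearMap.pi_apply, hD, Matrix.cons_val_zero, Matrix.cons_val_one,
      Matrix.head_cons, Matrix.cons_val_two, Matrix.tail_cons,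
      ContinuousLinearMap.add_apply, ContinuousLinearMap.sub_apply,
      ContinuousLinearMap.smul_apply, smul_eq_mul]
    rw [hv 0, hv 1, hv 2, hv 3]
    have hs : uh x 0 * uh x 0 + uh x 1 * uh x 1 + uh x 2 * uh x 2 + uh x 3 * uh x 3 = 1 := by
      have := hsph x
      simpa [dotProduct, Fin.sum_univ_four] using this
    set v0 := L 0 (Pi.single j 1)
    set v1 := L 1 (Pi.single j 1)
    set v2 := L 2 (Pi.single j 1)
    set v3 := L 3 (Pi.single j 1)
    linear_combination (-(v0 * v0 + v1 * v1 + v2 * v2 + v3 * v3)) * hs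
  rw [Fin.sum_univ_three, Fin.sum_univ_three, Fin.sum_univ_three,
    key 0, key 1, key 2]
  ring
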